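/- arXiv:2502.18090 — 4 statements merged into one kernel-verified Lean document; each statement's English description precedes it below -/
import Mathlib

section
/- For every finite graph G, the chromatic number satisfies χ(G) ≤ wd(G) + 1, where wd(G) is the weak degeneracy of G. -/
open SimpleGraph

universe u

/-- `G` is strictly `f`-degenerate: every nonempty subgraph `R` of `G` contains a vertex `v`
with `d_R(v) < f(v)`. -/
def StrictlyDegenerate {V : Type u} (G : SimpleGraph V) (f : V → ℤ) : Prop :=
  ∀ R : G.Subgraph, R.verts.Nonempty → ∃ v ∈ R.verts, ((R.neighborSet v).ncard : ℤ) < f v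

/-- `G` is `k`-degenerate: every nonempty subgraph has a vertex of degree at most `k`. -/
def Degenerate {V : Type u} (G : SimpleGraph V) (k : ℕ) : Prop :=
  ∀ R : G.Subgraph, R.verts.Nonempty → ∃ v ∈ R.verts, (R.neighborSet v).ncard ≤ k

open Classical in
/-- `WeakReduce G S f` : the graph induced by the set `S` of remaining vertices, together with
the function `f`, can be reduced to the null graph by a sequence of legal `Delete` and
`DeleteSave` operations. -/
inductive WeakReduce {V : Type u} (G : SimpleGraph V) : Set V → (V → ℤ) → Prop
  | nil (f : V → ℤ) : WeakReduce G ∅ f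
  | delete (S : Set V) (f : V → ℤ) (u : V) (hu : u ∈ S) (h0 : 0 ≤ f u)
      (hpos : ∀ x ∈ S \ {u}, 0 ≤ f x - (if G.Adj u x then 1 else 0))
      (ih : WeakReduce G (S \ {u}) (fun x => f x - (if G.Adj u x then 1 else 0))) :
      WeakReduce G S f
  | deleteSave (S : Set V) (f : V → ℤ) (a b : V) (ha : a ∈ S) (hb : b ∈ S)
      (hab : G.Adj a b) (hfab : f b < f a)
      (hpos : ∀ x ∈ S \ {a}, 0 ≤ f x - (if G.Adj a x ∧ x ≠ b then 1 else 0))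
      (ih : WeakReduce G (S \ {a}) (fun x => f x - (if G.Adj a x ∧ x ≠ b then 1 else 0))) :
      WeakReduce G S f

/-- `G` is weakly `f`-degenerate. -/
def WeaklyFDegenerate {V : Type u} (G : SimpleGraph V) (f : V → ℤ) : Prop :=
  WeakReduce G Set.univ f

/-- `G` is weakly `k`-degenerate. -/
def WeaklyDegenerate {V : Type u} (G : SimpleGraph V) (k : ℕ) : Prop :=
  WeaklyFDegenerate G (fun _ => (k : ℤ))

/-- The weak degeneracy `wd(G)`. -/
noncomputable def weakDegeneracy {V : Type u} (G : SimpleGraph V) : ℕ :=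
  sInf {k | WeaklyDegenerate G k}

/-- The degeneracy `d(G)`. -/
noncomputable def degeneracy {V : Type u} (G : SimpleGraph V) : ℕ :=
  sInf {k | Degenerate G k}

/-- A combinatorial plane graph: a graph together with a family of faces, each given by a
closed boundary walk, such that every edge lies on boundary walks with total multiplicity two,
and satisfying Euler's formula when the graph is connected. -/
structure PlaneGraph (V : Type u) [Fintype V] [DecidableEq V] where
  graph : SimpleGraph V
  numFaces : ℕ
  root : Fin numFaces → V
  boundary : (i : Fin numFaces) → graph.Walk (root i) (root i)
  edge_two_faces : ∀ e ∈ graph.edgeSet, (∑ i, ((boundary i).edges.count e)) = 2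
  euler : graph.Connected →
    (Fintype.card V : ℤ) - (graph.edgeSet.ncard : ℤ) + (numFaces : ℤ) = 2

/-- The size of a face: the length of its boundary closed walk. -/
def PlaneGraph.faceSize {V : Type u} [Fintype V] [DecidableEq V] (P : PlaneGraph V)
    (i : Fin P.numFaces) : ℕ :=
  (P.boundary i).length

/-- A graph is planar if it admits a plane embedding. -/
def SimpleGraph.IsPlanarEmb {V : Type u} [Fintype V] [DecidableEq V]
    (G : SimpleGraph V) : Prop :=
  ∃ P : PlaneGraph V, P.graph = G

/-- `G` has no cycle of length `n`. -/
def NoCycleLength {V : Type u} (G : SimpleGraph V) (n : ℕ) : Prop :=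
  ∀ (v : V) (c : G.Walk v v), c.IsCycle → c.length ≠ n

/-- A triangle of `G`, as a set of three pairwise adjacent vertices. -/
def IsTriangle {V : Type u} (G : SimpleGraph V) (s : Finset V) : Prop :=
  s.card = 3 ∧ ∀ x ∈ s, ∀ y ∈ s, x ≠ y → G.Adj x y

/-- Any two (distinct) triangles of `G` are at distance at least `2`. -/
def TrianglesFar {V : Type u} (G : SimpleGraph V) : Prop :=
  ∀ s t : Finset V, IsTriangle G s → IsTriangle G t → s ≠ t →
    ∀ x ∈ s, ∀ y ∈ t, 2 ≤ G.dist x y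


/-!
A weakly `f`-degenerate graph is `(f + 1)`-choosable, by induction along the deletion sequence.
To delete `u`, give it a colour from its list and erase that colour from the lists of its
neighbours; a neighbour loses at most one colour, matching the decrease of `f` under `Delete`.
Under `DeleteSave (a, b)` the list of `b` must not shrink: either some colour of `a` is missing
from the list of `b`, or the list of `b` contains that of `a`, so it has more than `f a > f b`
colours and can afford to lose one.
-/

open Finset

section

variable {V : Type u} {α : Type*} (G : SimpleGraph V)

def ProperListColoringOn (S : Set V) (L : V → Finset α) (c : V → α) : Prop :=
  (∀ x ∈ S, c x ∈ L x) ∧ ∀ x ∈ S, ∀ y ∈ S, G.Adj x y → c x ≠ c y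

open Classical in
noncomputable def neighborErase [DecidableEq α] (L : V → Finset α) (u : V) (a : α) :
    V → Finset α :=
  fun x => if G.Adj u x then (L x).erase a else L x

open Classical in
lemma card_sub_le_card_neighborErase [DecidableEq α] (L : V → Finset α) (u : V) (a : α)
    (x : V) : (#(L x) : ℤ) - (if G.Adj u x then 1 else 0) ≤ #(neighborErase G L u a x) := by
  unfold neighborErase
  split_ifs
  · have := (L x).pred_card_le_card_erase (a := a)
    have := (L x).card_erase_le (a := a)
    omega
  · rfl

variable {G}

lemma ProperListColoringOn.update [DecidableEq V] [DecidableEq α] {S : Set V}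
    {L : V → Finset α} {u : V} {a : α} {c : V → α}
    (hc : ProperListColoringOn G (S \ {u}) (neighborErase G L u a) c)
    (ha : a ∈ L u) : ProperListColoringOn G S L (Function.update c u a) := by
  obtain ⟨hmem, hproper⟩ := hc
  have hne_of_adj : ∀ y ∈ S, G.Adj u y → c y ≠ a := fun y hy hadj => by
    have := hmem y ⟨hy, hadj.ne'⟩
    simp only [neighborErase, if_pos hadj] at this
    exact Finset.ne_of_mem_erase this
  refine ⟨fun x hx => ?_, fun x hx y hy hxy => ?_⟩
  · rcases eq_or_ne x u with rfl | hxu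
    · simpa using ha
    · have := hmem x ⟨hx, hxu⟩
      simp only [neighborErase] at this
      rw [Function.update_of_ne hxu]
      split_ifs at this
      exacts [Finset.mem_of_mem_erase this, this]
  · rcases eq_or_ne x u with rfl | hxu
    · rw [Function.update_self, Function.update_of_ne hxy.ne']
      exact (hne_of_adj y hy hxy).symm
    rcases eq_or_ne y u with rfl | hyu
    · rw [Function.update_self, Function.update_of_ne hxu]
      exact hne_of_adj x hx hxy.symm
    rw [Function.update_of_ne hxu, Function.update_of_ne hyu]
    exact hproper x ⟨hx, hxu⟩ y ⟨hy, hyu⟩ hxy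

lemma exists_mem_lt_card_erase [DecidableEq α] {A B : Finset α} {m n : ℤ} (hm : 0 ≤ m)
    (hmn : m < n) (hA : n < #A) (hB : m < #B) : ∃ a ∈ A, m < #(B.erase a) := by
  by_cases hAB : A ⊆ B
  · obtain ⟨a, ha⟩ : A.Nonempty := Finset.card_pos.mp (by omega)
    have := B.pred_card_le_card_erase (a := a)
    have := Finset.card_le_card hAB
    exact ⟨a, ha, by omega⟩
  · obtain ⟨a, haA, haB⟩ := Finset.not_subset.mp hAB
    exact ⟨a, haA, by rwa [Finset.erase_eq_of_notMem haB]⟩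

theorem WeakReduce.exists_properListColoringOn [Inhabited α] {S : Set V} {f : V → ℤ}
    (h : WeakReduce G S f) (L : V → Finset α) (hL : ∀ x ∈ S, f x < #(L x)) :
    ∃ c, ProperListColoringOn G S L c := by
  classical
  induction h generalizing L with
  | nil => exact ⟨fun _ => default, by simp [ProperListColoringOn]⟩
  | delete S f u hu hfu hpos _ ih =>
    obtain ⟨a, ha⟩ : (L u).Nonempty := Finset.card_pos.mp (by have := hL u hu; omega)
    obtain ⟨c, hc⟩ := ih (neighborErase G L u a) fun x hx =>
      (sub_lt_sub_right (hL x hx.1) _).trans_le (card_sub_le_card_neighborErase G L u a x)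
    exact ⟨_, hc.update ha⟩
  | deleteSave S f a b ha hb hab hfab hpos _ ih =>
    have hba : b ≠ a := hab.ne'
    have hfb : 0 ≤ f b := by simpa [hba] using hpos b ⟨hb, hba⟩
    obtain ⟨col, hcol, hsave⟩ := exists_mem_lt_card_erase hfb hfab (hL a ha) (hL b hb)
    obtain ⟨c, hc⟩ := ih (neighborErase G L a col) fun x hx => by
      rcases eq_or_ne x b with rfl | hxb
      · simpa [neighborErase, hab, hba] using hsave
      · have := card_sub_le_card_neighborErase G L a col x
        have := hL x hx.1
        simp only [hxb, ne_eq, not_false_eq_true, and_true] at this ⊢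
        omega
    exact ⟨_, hc.update hcol⟩

theorem WeaklyDegenerate.colorable {k : ℕ} (h : WeaklyDegenerate G k) :
    G.Colorable (k + 1) := by
  obtain ⟨c, -, hc⟩ := WeakReduce.exists_properListColoringOn h
    (fun _ => (Finset.univ : Finset (Fin (k + 1)))) (by simp)
  exact ⟨Coloring.mk c fun hxy => hc _ trivial _ trivial hxy⟩

variable (G)

theorem weakReduce_of_card_sub_one_le (s : Finset V) (f : V → ℤ)
    (hf : ∀ x ∈ s, (#s : ℤ) - 1 ≤ f x) : WeakReduce G s f := by
  classical
  induction s using Finset.induction_on generalizing f with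
  | empty => simpa using WeakReduce.nil f
  | insert u s hus ih =>
    rw [Finset.card_insert_of_notMem hus] at hf
    have hdiff : (↑(insert u s) : Set V) \ {u} = s := by simp [hus]
    have hlarge : ∀ x ∈ s, (#s : ℤ) ≤ f x := fun x hx => by
      have := hf x (Finset.mem_insert_of_mem hx)
      push_cast at this
      omega
    refine WeakReduce.delete _ f u (by simp) (by have := hf u (by simp); omega)
      (fun x hx => ?_) ?_
    · rw [hdiff] at hx
      have := Finset.card_pos.mpr ⟨x, hx⟩
      have := hlarge x hx
      split_ifs <;> omega
    · rw [hdiff]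
      exact ih _ fun x hx => by have := hlarge x hx; split_ifs <;> omega

theorem weaklyDegenerate_card [Fintype V] :
    WeaklyDegenerate G (Fintype.card V) := by
  unfold WeaklyDegenerate WeaklyFDegenerate
  simpa using weakReduce_of_card_sub_one_le G Finset.univ (fun _ => (Fintype.card V : ℤ))
    (by simp)

end

/-- for every finite graph `G`, `χ(G) ≤ wd(G) + 1`. -/
theorem stmt5 {V : Type u} [Fintype V] (G : SimpleGraph V) :
    G.chromaticNumber ≤ (weakDegeneracy G : ℕ∞) + 1 := by
  have hwd : WeaklyDegenerate G (weakDegeneracy G) :=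
    Nat.sInf_mem (s := {k | WeaklyDegenerate G k}) ⟨_, weaklyDegenerate_card G⟩
  exact_mod_cast hwd.colorable.chromaticNumber_le
end

section
/- If G is a graph such that wd(G) = d ≥ 3 and wd(G*) < d for every proper subgraph G* of G, then every vertex of G has degree at least d. -/
open SimpleGraph

universe u

/-!
If a vertex `v` had degree less than `d`, then by minimality `G - v` is weakly
`(d - 1)`-degenerate. Replay its reduction sequence inside `G`, keeping `v` aside: `v` starts
with value `d - 1 ≥ deg v`, and each operation lowers it by at most one while removing a
neighbour of `v`, so the value of `v` never drops below the number of its remaining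
neighbours. At the end `v` is isolated with a nonnegative value and can be deleted, so
`wd(G) ≤ d - 1`.
-/

namespace SimpleGraph

variable {V : Type*} (G : SimpleGraph V)

open Classical in
theorem ncard_neighborSet_inter_sdiff_singleton_add {S : Set V} (hS : S.Finite) {u : V}
    (hu : u ∈ S) (v : V) :
    ((G.neighborSet v ∩ (S \ {u})).ncard : ℤ) + (if G.Adj u v then 1 else 0)
      = (G.neighborSet v ∩ S).ncard := by
  rw [← Set.inter_sdiff_assoc]
  split_ifs with huv
  · exact_mod_cast
      Set.ncard_sdiff_singleton_add_one (Set.mem_inter huv.symm hu) (hS.inter_of_right _)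
  · rw [Set.sdiff_singleton_eq_self fun h => huv h.1.symm, add_zero]

end SimpleGraph

namespace WeakReduce

variable {V : Type*} {G : SimpleGraph V}

theorem finite {S : Set V} {f : V → ℤ} (h : WeakReduce G S f) : S.Finite := by
  induction h with
  | nil => exact Set.finite_empty
  | delete S f u _ _ _ _ ih | deleteSave S f u _ _ _ _ _ _ _ ih =>
    exact ih.of_sdiff (Set.finite_singleton u)

theorem mono {S : Set V} {f g : V → ℤ} (h : WeakReduce G S f) (hfg : ∀ x ∈ S, f x ≤ g x) :
    WeakReduce G S g := by
  classical
  induction h generalizing g with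
  | nil => exact .nil g
  | delete S f u hu h0 hpos _ ih =>
    exact .delete S g u hu (h0.trans (hfg u hu))
      (fun x hx => (hpos x hx).trans (sub_le_sub_right (hfg x hx.1) _))
      (ih fun x hx => sub_le_sub_right (hfg x hx.1) _)
  | deleteSave S f a b ha hb hab hfab hpos _ ih =>
    by_cases hgab : g b < g a
    · exact .deleteSave S g a b ha hb hab hgab
        (fun x hx => (hpos x hx).trans (sub_le_sub_right (hfg x hx.1) _))
        (ih fun x hx => sub_le_sub_right (hfg x hx.1) _)
    -- Otherwise `g b ≥ g a > f b`, so `b` can absorb the decrement and a plain `Delete` works.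
    have hfb : 0 ≤ f b := by simpa using hpos b ⟨hb, hab.ne'⟩
    have hga := hfg a ha
    have hle : ∀ x ∈ S \ {a}, f x - (if G.Adj a x ∧ x ≠ b then 1 else 0)
        ≤ g x - (if G.Adj a x then 1 else 0) := by
      intro x hx
      have hx' := hfg x hx.1
      by_cases hxb : x = b
      · subst hxb
        split_ifs <;> omega
      · simp only [hxb, ne_eq, not_false_eq_true, and_true]
        omega
    exact .delete S g a ha (by omega) (fun x hx => (hpos x hx).trans (hle x hx)) (ih hle)

theorem of_ncard_le {S : Set V} (hS : S.Finite) {f : V → ℤ}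
    (hf : ∀ x ∈ S, (S.ncard : ℤ) ≤ f x) : WeakReduce G S f := by
  classical
  induction S, hS using Set.Finite.induction_on generalizing f with
  | empty => exact .nil f
  | @insert u S hu hS ih =>
    have hcard : ((insert u S).ncard : ℤ) = S.ncard + 1 := by
      rw [Set.ncard_insert_of_notMem hu hS]; push_cast; rfl
    refine .delete _ f u (Set.mem_insert u S) ?_ (fun x hx => ?_) ?_
    · have := hf u (Set.mem_insert u S)
      omega
    · have := hf x hx.1
      split_ifs <;> omega
    · rw [Set.insert_sdiff_self_of_notMem hu]
      refine ih fun x hx => ?_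
      have := hf x (Set.mem_insert_of_mem u hx)
      split_ifs <;> omega

theorem map {W : Type*} {H : SimpleGraph W} (φ : H ↪g G) {T : Set W} {g : W → ℤ}
    (h : WeakReduce H T g) {f : V → ℤ} (hfg : ∀ x ∈ T, f (φ x) = g x) :
    WeakReduce G (φ '' T) f := by
  classical
  induction h generalizing f with
  | nil => simpa using .nil f
  | delete T g u hu h0 hpos _ ih =>
    refine .delete _ f (φ u) ⟨u, hu, rfl⟩ (hfg u hu ▸ h0) ?_ ?_
    · rw [← Set.image_singleton, ← Set.image_sdiff φ.injective]
      rintro _ ⟨x, hx, rfl⟩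
      simpa [hfg x hx.1] using hpos x hx
    · rw [← Set.image_singleton, ← Set.image_sdiff φ.injective]
      exact ih fun x hx => by simp [hfg x hx.1]
  | deleteSave T g a b ha hb hab hfab hpos _ ih =>
    refine .deleteSave _ f (φ a) (φ b) ⟨a, ha, rfl⟩ ⟨b, hb, rfl⟩ (φ.map_adj_iff.mpr hab)
      (by rwa [hfg a ha, hfg b hb]) ?_ ?_
    · rw [← Set.image_singleton, ← Set.image_sdiff φ.injective]
      rintro _ ⟨x, hx, rfl⟩
      simpa [hfg x hx.1] using hpos x hx
    · rw [← Set.image_singleton, ← Set.image_sdiff φ.injective]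
      exact ih fun x hx => by simp [hfg x hx.1]

theorem insert {S : Set V} {f : V → ℤ} (h : WeakReduce G S f) {v : V} (hv : v ∉ S)
    {f' : V → ℤ} (hf : ∀ x ∈ S, f' x = f x)
    (hdeg : ((G.neighborSet v ∩ S).ncard : ℤ) ≤ f' v) :
    WeakReduce G (insert v S) f' := by
  classical
  induction h generalizing f' with
  | nil =>
    refine .delete _ f' v (Set.mem_insert v ∅) (le_trans (by positivity) hdeg) (by simp) ?_
    simpa using .nil _
  | delete S f u hu h0 hpos hred ih =>
    have hvu : v ≠ u := (ne_of_mem_of_not_mem hu hv).symm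
    have hdeg' : ((G.neighborSet v ∩ (S \ {u})).ncard : ℤ)
        ≤ f' v - (if G.Adj u v then 1 else 0) := by
      linarith [G.ncard_neighborSet_inter_sdiff_singleton_add (hred.finite.of_sdiff
        (Set.finite_singleton u)) hu v]
    refine .delete _ f' u (Set.mem_insert_of_mem v hu) (hf u hu ▸ h0) ?_ ?_
    · rintro x ⟨rfl | hxS, hxu⟩
      · exact le_trans (by positivity) hdeg'
      · rw [hf x hxS]
        exact hpos x ⟨hxS, hxu⟩
    · rw [← Set.insert_sdiff_singleton_comm hvu]
      exact ih (fun hv' => hv hv'.1) (fun x hx => by rw [hf x hx.1]) hdeg'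
  | deleteSave S f a b ha hb hab hfab hpos hred ih =>
    have hva : v ≠ a := (ne_of_mem_of_not_mem ha hv).symm
    have hvb : v ≠ b := (ne_of_mem_of_not_mem hb hv).symm
    have hdeg' : ((G.neighborSet v ∩ (S \ {a})).ncard : ℤ)
        ≤ f' v - (if G.Adj a v ∧ v ≠ b then 1 else 0) := by
      simp only [ne_eq, hvb, not_false_eq_true, and_true]
      linarith [G.ncard_neighborSet_inter_sdiff_singleton_add (hred.finite.of_sdiff
        (Set.finite_singleton a)) ha v]
    refine .deleteSave _ f' a b (Set.mem_insert_of_mem v ha) (Set.mem_insert_of_mem v hb) hab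
      (by rwa [hf a ha, hf b hb]) ?_ ?_
    · rintro x ⟨rfl | hxS, hxa⟩
      · exact le_trans (by positivity) hdeg'
      · rw [hf x hxS]
        exact hpos x ⟨hxS, hxa⟩
    · rw [← Set.insert_sdiff_singleton_comm hva]
      exact ih (fun hv' => hv hv'.1) (fun x hx => by rw [hf x hx.1]) hdeg'

end WeakReduce

section

variable {V : Type*} {G : SimpleGraph V}

theorem WeaklyDegenerate.finite {k : ℕ} (h : WeaklyDegenerate G k) : Finite V :=
  Set.finite_univ_iff.mp (WeakReduce.finite h)

theorem WeaklyDegenerate.mono {k m : ℕ} (h : WeaklyDegenerate G k) (hkm : k ≤ m) :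
    WeaklyDegenerate G m :=
  WeakReduce.mono h fun _ _ => by exact_mod_cast hkm

theorem weakDegeneracy_le {k : ℕ} (h : WeaklyDegenerate G k) : weakDegeneracy G ≤ k :=
  Nat.sInf_le h

theorem weaklyDegenerate_weakDegeneracy_of_pos (h : 0 < weakDegeneracy G) :
    WeaklyDegenerate G (weakDegeneracy G) :=
  Nat.sInf_mem (Nat.nonempty_of_pos_sInf h)

theorem weaklyDegenerate_weakDegeneracy [Finite V] (G : SimpleGraph V) :
    WeaklyDegenerate G (weakDegeneracy G) :=
  Nat.sInf_mem (s := {k | WeaklyDegenerate G k})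
    ⟨Nat.card V, WeakReduce.of_ncard_le Set.finite_univ (by simp)⟩

theorem WeaklyDegenerate.of_deleteVerts_singleton {v : V} {k : ℕ}
    (hH : WeaklyDegenerate ((⊤ : G.Subgraph).deleteVerts {v}).coe k)
    (hv : (G.neighborSet v).ncard ≤ k) : WeaklyDegenerate G k := by
  set H := (⊤ : G.Subgraph).deleteVerts {v}
  have hind : H.IsInduced := fun _ hx _ hy hxy => by simp_all [H]
  let φ : H.coe ↪g G := ⟨Function.Embedding.subtype _, hind.adj.symm⟩
  have hφ : φ '' Set.univ = {v}ᶜ := by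
    rw [Set.image_univ]
    change Set.range Subtype.val = _
    simp [H, Set.compl_def]
  have hH' : WeakReduce G {v}ᶜ fun _ => (k : ℤ) :=
    hφ ▸ WeakReduce.map φ hH fun _ _ => rfl
  have hN : G.neighborSet v ∩ {v}ᶜ = G.neighborSet v :=
    Set.inter_eq_left.mpr fun _ hw => (G.ne_of_adj hw).symm
  have hG := hH'.insert (Set.notMem_compl_iff.mpr rfl) (fun _ _ => rfl)
    (by rw [hN]; exact_mod_cast hv)
  rwa [Set.insert_eq, Set.union_compl_self] at hG

end

theorem stmt10_general {V : Type u} (G : SimpleGraph V) (d : ℕ)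
    (h1 : weakDegeneracy G = d)
    (h2 : ∀ H : G.Subgraph, H ≠ ⊤ → weakDegeneracy H.coe < d) :
    ∀ v : V, d ≤ (G.neighborSet v).ncard := by
  intro v
  by_contra! hdeg
  set H := (⊤ : G.Subgraph).deleteVerts {v}
  have hH : weakDegeneracy H.coe < d :=
    h2 H fun h => by simpa [H] using congrArg (v ∈ ·.verts) h
  have hG : WeaklyDegenerate G d := h1 ▸ weaklyDegenerate_weakDegeneracy_of_pos (by omega)
  have := hG.finite
  have hG' : WeaklyDegenerate G (d - 1) :=
    ((weaklyDegenerate_weakDegeneracy H.coe).mono (by omega)).of_deleteVerts_singleton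
      (by omega)
  have := weakDegeneracy_le hG'
  omega

/-- if `wd(G) = d ≥ 3` and `wd(G*) < d` for every proper subgraph `G*` of `G`,
then every vertex of `G` has degree at least `d`. -/
theorem stmt10 {V : Type u} (G : SimpleGraph V) (d : ℕ) (hd : 3 ≤ d)
    (h1 : weakDegeneracy G = d)
    (h2 : ∀ H : G.Subgraph, H ≠ ⊤ → weakDegeneracy H.coe < d) :
    ∀ v : V, d ≤ (G.neighborSet v).ncard :=
  stmt10_general G d h1 h2
end

section
/- Let G be a graph in which every vertex has degree at most d, and suppose G contains a vertex of degree strictly less than d. If G is connected, then G is weakly (d−1)-degenerate. -/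
open SimpleGraph

universe u

open Classical in
theorem card_upd17 {V : Type u} [Fintype V] (G : SimpleGraph V) (S : Set V) (u x : V)
    (hu : u ∈ S) :
    ((G.neighborSet x \ (S \ {u})).ncard : ℤ)
      = ((G.neighborSet x \ S).ncard : ℤ) + (if G.Adj u x then 1 else 0) := by
  by_cases h : G.Adj u x
  · have hmem : u ∈ G.neighborSet x := h.symm
    have hset : G.neighborSet x \ (S \ {u}) = insert u (G.neighborSet x \ S) := by
      ext y
      by_cases hy : y = u <;> simp [hy, hmem, hu]
    rw [hset, Set.ncard_insert_of_notMem (by simp [hu]), if_pos h]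
    push_cast; ring
  · have hset : G.neighborSet x \ (S \ {u}) = G.neighborSet x \ S := by
      ext y
      by_cases hy : y = u
      · subst hy
        simp only [SimpleGraph.mem_neighborSet, Set.mem_diff, Set.mem_singleton_iff]
        constructor
        · rintro ⟨h', -⟩; exact absurd h'.symm h
        · rintro ⟨h', -⟩; exact absurd h'.symm h
      · simp [hy]
    rw [hset, if_neg h, add_zero]

/-- a connected graph with maximum degree at most `d` containing a vertex of
degree strictly less than `d` is weakly `(d − 1)`-degenerate. -/
theorem stmt17 {V : Type u} [Fintype V] (G : SimpleGraph V) (d : ℕ)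
    (hmax : ∀ v : V, (G.neighborSet v).ncard ≤ d)
    (hlt : ∃ v : V, (G.neighborSet v).ncard < d)
    (hc : G.Connected) :
    WeaklyDegenerate G (d - 1) := by
  classical
  obtain ⟨v₀, hv₀⟩ := hlt
  have hdeg1 : (G.neighborSet v₀).ncard ≤ d - 1 := Nat.le_sub_one_of_lt hv₀
  set fS : Set V → V → ℤ :=
    fun S x => ((d - 1 : ℕ) : ℤ) - ((G.neighborSet x \ S).ncard : ℤ) with hfSdef
  have hbound : ∀ (S : Set V) (x : V), (x = v₀ ∨ ∃ y ∈ S, G.Adj x y) → 0 ≤ fS S x := by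
    intro S x hx
    have hcard : (G.neighborSet x \ S).ncard ≤ d - 1 := by
      rcases hx with rfl | ⟨y, hyS, hxy⟩
      · exact le_trans (Set.ncard_le_ncard Set.diff_subset) hdeg1
      · have hymem : y ∈ G.neighborSet x := hxy
        have hsub : G.neighborSet x \ S ⊆ G.neighborSet x \ {y} := by
          intro z hz; exact ⟨hz.1, fun h => hz.2 (h ▸ hyS)⟩
        calc (G.neighborSet x \ S).ncard ≤ (G.neighborSet x \ {y}).ncard :=
              Set.ncard_le_ncard hsub
          _ = (G.neighborSet x).ncard - 1 := Set.ncard_diff_singleton_of_mem hymem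
          _ ≤ d - 1 := Nat.sub_le_sub_right (hmax x) 1
    have : ((G.neighborSet x \ S).ncard : ℤ) ≤ ((d - 1 : ℕ) : ℤ) := Nat.cast_le.mpr hcard
    show (0 : ℤ) ≤ ((d - 1 : ℕ) : ℤ) - ((G.neighborSet x \ S).ncard : ℤ)
    linarith
  have main : ∀ (n : ℕ) (S : Set V), S.ncard = n →
      (∀ x ∈ S, x ≠ v₀ → ∃ y ∈ S, G.Adj x y ∧ G.dist v₀ y < G.dist v₀ x) →
      WeakReduce G S (fS S) := by
    intro n
    induction n using Nat.strong_induction_on with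
    | _ n ih =>
      intro S hcard hinv
      rcases S.eq_empty_or_nonempty with rfl | hne
      · exact WeakReduce.nil _
      rcases (S \ {v₀}).eq_empty_or_nonempty with hT | hT
      · have hSeq : S = {v₀} := (hne.subset_singleton_iff).mp (Set.diff_eq_empty.mp hT)
        subst hSeq
        refine WeakReduce.delete _ _ v₀ rfl (hbound _ _ (Or.inl rfl)) ?_ ?_
        · intro x hx; exact absurd hx.1 hx.2
        · have hE : ({v₀} : Set V) \ {v₀} = ∅ := by simp
          rw [hE]; exact WeakReduce.nil _
      · obtain ⟨u, huT, hmaxu⟩ := Finset.exists_max_image (S \ {v₀}).toFinset (G.dist v₀)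
          (Set.toFinset_nonempty.mpr hT)
        rw [Set.mem_toFinset] at huT
        obtain ⟨huS, hune⟩ := huT
        have hune : u ≠ v₀ := hune
        have hmaxu' : ∀ x ∈ S, x ≠ v₀ → G.dist v₀ x ≤ G.dist v₀ u := by
          intro x hx hxv
          exact hmaxu x (by rw [Set.mem_toFinset]; exact ⟨hx, hxv⟩)
        have hwit : ∀ x ∈ S \ {u}, x = v₀ ∨
            ∃ y ∈ S \ {u}, G.Adj x y ∧ G.dist v₀ y < G.dist v₀ x := by
          intro x hx
          by_cases hxv : x = v₀
          · exact Or.inl hxv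
          · obtain ⟨y, hyS, hadj, hdist⟩ := hinv x hx.1 hxv
            have hyne : y ≠ u := by
              intro h; subst h
              exact absurd (lt_of_lt_of_le hdist (hmaxu' x hx.1 hxv)) (lt_irrefl _)
            exact Or.inr ⟨y, ⟨hyS, hyne⟩, hadj, hdist⟩
        have hfun : (fun x => fS S x - (if G.Adj u x then 1 else 0)) = fS (S \ {u}) := by
          funext x
          have h1 := card_upd17 G S u x huS
          show fS S x - _ = ((d - 1 : ℕ) : ℤ) - ((G.neighborSet x \ (S \ {u})).ncard : ℤ)
          simp only [hfSdef]
          linarith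
        refine WeakReduce.delete S (fS S) u huS ?_ ?_ ?_
        · refine hbound S u (Or.inr ?_)
          obtain ⟨y, hyS, hadj, -⟩ := hinv u huS hune
          exact ⟨y, hyS, hadj⟩
        · intro x hx
          have := congrFun hfun x
          rw [this]
          refine hbound (S \ {u}) x ?_
          rcases hwit x hx with h | ⟨y, hy, hadj, -⟩
          · exact Or.inl h
          · exact Or.inr ⟨y, hy, hadj⟩
        · rw [hfun]
          refine ih (S \ {u}).ncard ?_ (S \ {u}) rfl ?_
          · rw [← hcard]
            exact Set.ncard_diff_singleton_lt_of_mem huS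
          · intro x hx hxv
            rcases hwit x hx with h | h
            · exact absurd h hxv
            · exact h
  have hinvuniv : ∀ x ∈ (Set.univ : Set V), x ≠ v₀ →
      ∃ y ∈ (Set.univ : Set V), G.Adj x y ∧ G.dist v₀ y < G.dist v₀ x := by
    intro x _ hxv
    have hdpos : 0 < G.dist v₀ x := hc.pos_dist_of_ne (fun h => hxv h.symm)
    obtain ⟨p, hp⟩ := hc.exists_walk_length_eq_dist x v₀
    cases p with
    | nil => exact absurd rfl hxv
    | @cons _ y _ h q =>
      refine ⟨y, Set.mem_univ y, h, ?_⟩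
      have h1 : G.dist y v₀ ≤ q.length := SimpleGraph.dist_le q
      rw [SimpleGraph.Walk.length_cons] at hp
      have h2 : G.dist x v₀ = G.dist v₀ x := SimpleGraph.dist_comm
      have h3 : G.dist v₀ y = G.dist y v₀ := SimpleGraph.dist_comm
      omega
  have hfin : fS Set.univ = fun _ => ((d - 1 : ℕ) : ℤ) := by
    funext x
    simp [hfSdef]
  have := main (Set.univ : Set V).ncard Set.univ rfl hinvuniv
  rw [hfin] at this
  exact this
end

section
/- In a plane graph where any two triangles have distance at least 2, every face f of size d(f) is adjacent to at most ⌊d(f)/3⌋ faces of size 3 (counted with multiplicity of shared edges), provided each 3-face shares exactly one edge with f. -/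
open SimpleGraph

universe u

/-!
Each `3`-face `j` adjacent to the face `i` contains an edge sitting at some position `p j` of
the closed boundary walk of `i`. The vertices of `j` form a triangle, and distinct such faces give
distinct triangles, since otherwise an edge would lie on three faces. As distinct triangles are at
distance at least `2`, the endpoints of the marked edges at `p j` and `p j'` are neither equal nor
adjacent, so the marked positions are cyclically at least `3` apart on a walk of length `d(i)`.
-/
lemma Finset.card_le_div_of_cyclic_gap {s : Finset ℕ} {d k : ℕ} (hk : 0 < k) (hkd : k ≤ d)
    (hgap : ∀ x ∈ s, ∀ y ∈ s, x < y → x + k ≤ y ∧ y + k ≤ x + d) : s.card ≤ d / k := by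
  rcases s.eq_empty_or_nonempty with rfl | hs
  · simp
  set m := s.min' hs
  have hm : ∀ x ∈ s, m ≤ x := fun x hx => s.min'_le x hx
  have hmk : ∀ x ∈ s, x - m + k ≤ d := by
    intro x hx
    rcases (hm x hx).eq_or_lt with h | h
    · omega
    · have := (hgap m (s.min'_mem hs) x hx h).2
      omega
  have hblock : ∀ a b, a + k ≤ b → a / k < b / k := fun a b hab =>
    (Nat.lt_succ_self _).trans_le
      ((Nat.add_div_right a hk).symm.trans_le (Nat.div_le_div_right hab))
  have hmono : StrictMonoOn (fun x => (x - m) / k) (s : Set ℕ) := fun x hx y hy h =>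
    hblock _ _ (by have := (hgap x hx y hy h).1; have := hm x hx; omega)
  calc s.card ≤ (Finset.range (d / k)).card :=
        Finset.card_le_card_of_injOn _ (fun x hx => by simpa using hblock _ _ (hmk x hx))
          hmono.injOn
    _ = d / k := Finset.card_range _

namespace SimpleGraph.Walk

variable {V : Type u} {G : SimpleGraph V} {u : V}

lemma two_le_count_edges_of_length_lt_three [DecidableEq V] (w : G.Walk u u)
    (hw : w.length < 3) {e : Sym2 V} (he : e ∈ w.edges) : 2 ≤ w.edges.count e := by
  match w, hw, he with
  | .cons h .nil, _, _ => exact absurd rfl h.ne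
  | .cons _ (.cons _ .nil), _, he =>
    simp only [edges_cons, edges_nil, List.mem_cons, List.not_mem_nil, or_false] at he
    rcases he with rfl | rfl <;> simp [Sym2.eq_swap]
  | .cons _ (.cons _ (.cons _ _)), hw, _ => simp only [length_cons] at hw; omega

lemma mk_mem_edges_of_length_eq_three (w : G.Walk u u) (hw : w.length = 3) {x y : V}
    (hx : x ∈ w.support) (hy : y ∈ w.support) (hxy : x ≠ y) : s(x, y) ∈ w.edges := by
  match w, hw with
  | .cons _ (.cons _ (.cons _ .nil)), _ =>
    simp only [support_cons, support_nil, List.mem_cons, List.not_mem_nil, or_false] at hx hy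
    simp only [edges_cons, edges_nil, List.mem_cons, List.not_mem_nil, or_false, Sym2.eq_iff]
    grind

lemma isTriangle_support_toFinset [DecidableEq V] (w : G.Walk u u) (hw : w.length = 3) :
    IsTriangle G w.support.toFinset := by
  refine ⟨?_, fun x hx y hy hxy => ?_⟩
  · match w, hw with
    | .cons h₁ (.cons h₂ (.cons h₃ .nil)), _ =>
      simpa using Finset.card_eq_three.2 ⟨_, _, _, h₂.ne, h₁.ne', h₃.ne, rfl⟩
  · rw [List.mem_toFinset] at hx hy
    exact w.adj_of_mem_edges (w.mk_mem_edges_of_length_eq_three hw hx hy hxy)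

lemma add_three_le_of_two_le_dist (w : G.Walk u u) {p q : ℕ} (hpq : p < q)
    (hq : q < w.length) {s t : Set V} (hps : w.getVert p ∈ s ∧ w.getVert (p + 1) ∈ s)
    (hqt : w.getVert q ∈ t ∧ w.getVert (q + 1) ∈ t) (hst : ∀ x ∈ s, ∀ y ∈ t, 2 ≤ G.dist x y) :
    p + 3 ≤ q ∧ q + 3 ≤ p + w.length := by
  have hne : ∀ x ∈ s, ∀ y ∈ t, x ≠ y := by
    rintro x hx _ hy rfl
    simpa using hst x hx x hy
  have hnadj : ∀ x ∈ s, ∀ y ∈ t, ¬ G.Adj x y := fun x hx y hy hxy => by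
    simpa [dist_eq_one_iff_adj.2 hxy] using hst x hx y hy
  have hclosed : w.getVert w.length = w.getVert 0 := by simp
  constructor
  · by_contra! h
    obtain rfl | rfl : q = p + 1 ∨ q = p + 2 := by omega
    · exact hne _ hps.2 _ hqt.1 rfl
    · exact hnadj _ hps.2 _ hqt.1 (w.adj_getVert_succ (by omega))
  · by_contra! h
    obtain ⟨rfl, hl⟩ | ⟨rfl, hl⟩ | ⟨rfl, hl⟩ :
        p = 0 ∧ q + 1 = w.length ∨ p = 0 ∧ q + 2 = w.length ∨ p = 1 ∧ q + 1 = w.length := by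
      omega
    · exact hne _ hps.1 _ hqt.2 (by rw [hl, hclosed])
    · have := w.adj_getVert_succ (i := q + 1) (by omega)
      rw [show q + 1 + 1 = w.length by omega, hclosed] at this
      exact hnadj _ hps.1 _ hqt.2 this.symm
    · have := w.adj_getVert_succ (i := 0) (by omega)
      rw [← hclosed, ← hl] at this
      exact hnadj _ hps.1 _ hqt.2 this.symm

lemma card_le_length_div_three {ι : Type*} (w : G.Walk u u) (hw : 3 ≤ w.length)
    {S : Finset ι} {p : ι → ℕ} {T : ι → Set V} (hp : ∀ j ∈ S, p j < w.length)
    (hpT : ∀ j ∈ S, w.getVert (p j) ∈ T j ∧ w.getVert (p j + 1) ∈ T j)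
    (hT : ∀ j ∈ S, ∀ j' ∈ S, j ≠ j' → ∀ x ∈ T j, ∀ y ∈ T j', 2 ≤ G.dist x y) :
    S.card ≤ w.length / 3 := by
  have hinj : Set.InjOn p S := by
    intro j hj j' hj' hpp
    by_contra hne
    have := hT j hj j' hj' hne _ (hpT j hj).1 _ (hpp ▸ (hpT j' hj').1)
    simp at this
  rw [← Finset.card_image_of_injOn hinj]
  refine Finset.card_le_div_of_cyclic_gap (by norm_num) hw ?_
  simp only [Finset.mem_image]
  rintro _ ⟨j, hj, rfl⟩ _ ⟨j', hj', rfl⟩ hlt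
  exact w.add_three_le_of_two_le_dist hlt (hp j' hj') (hpT j hj) (hpT j' hj')
    (hT j hj j' hj' (by rintro rfl; exact hlt.ne rfl))

end SimpleGraph.Walk

namespace PlaneGraph

variable {V : Type u} [Fintype V] [DecidableEq V] (P : PlaneGraph V)

lemma sum_count_boundary_edges_le_two (t : Finset (Fin P.numFaces)) {e : Sym2 V}
    (he : e ∈ P.graph.edgeSet) : ∑ k ∈ t, (P.boundary k).edges.count e ≤ 2 :=
  P.edge_two_faces e he ▸ Finset.sum_le_sum_of_subset t.subset_univ

lemma eq_or_eq_or_eq_of_mem_boundary_edges {j k l : Fin P.numFaces} {e : Sym2 V}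
    (hj : e ∈ (P.boundary j).edges) (hk : e ∈ (P.boundary k).edges)
    (hl : e ∈ (P.boundary l).edges) : j = k ∨ j = l ∨ k = l := by
  by_contra! h
  have hsum := P.sum_count_boundary_edges_le_two {j, k, l} ((P.boundary j).edges_subset_edgeSet hj)
  rw [Finset.sum_insert (by simp [h.1, h.2.1]), Finset.sum_insert (by simp [h.2.2]),
    Finset.sum_singleton] at hsum
  have := List.count_pos_iff.2 hj
  have := List.count_pos_iff.2 hk
  have := List.count_pos_iff.2 hl
  omega

lemma three_le_faceSize {i j : Fin P.numFaces} (hji : j ≠ i) {e : Sym2 V}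
    (hj : e ∈ (P.boundary j).edges) (hi : e ∈ (P.boundary i).edges) : 3 ≤ P.faceSize i := by
  by_contra! h
  have hsum := P.sum_count_boundary_edges_le_two {i, j} ((P.boundary i).edges_subset_edgeSet hi)
  rw [Finset.sum_insert (by simp [hji.symm]), Finset.sum_singleton] at hsum
  have := (P.boundary i).two_le_count_edges_of_length_lt_three h hi
  have := List.count_pos_iff.2 hj
  omega

lemma support_toFinset_ne_of_faceSize_eq_three {i j j' : Fin P.numFaces} (hji : j ≠ i)
    (hj'i : j' ≠ i) (hjj' : j ≠ j') (hj' : P.faceSize j' = 3) {x y : V}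
    (hj : s(x, y) ∈ (P.boundary j).edges) (hi : s(x, y) ∈ (P.boundary i).edges) :
    (P.boundary j).support.toFinset ≠ (P.boundary j').support.toFinset := by
  intro hT
  have mem_support' : ∀ z ∈ (P.boundary j).support, z ∈ (P.boundary j').support := fun z hz => by
    simpa [hT] using List.mem_toFinset.2 hz
  have hj'e := (P.boundary j').mk_mem_edges_of_length_eq_three hj'
    (mem_support' _ ((P.boundary j).fst_mem_support_of_mem_edges hj))
    (mem_support' _ ((P.boundary j).snd_mem_support_of_mem_edges hj))
    ((P.boundary j).adj_of_mem_edges hj).ne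
  rcases P.eq_or_eq_or_eq_of_mem_boundary_edges hj hj'e hi with h | h | h
  exacts [hjj' h, hji h, hj'i h]

end PlaneGraph

theorem stmt19_general {V : Type u} [Fintype V] [DecidableEq V] (P : PlaneGraph V)
    (ht : TrianglesFar P.graph) (i : Fin P.numFaces) :
    {j : Fin P.numFaces | j ≠ i ∧ P.faceSize j = 3 ∧
        ∃ e : Sym2 V, e ∈ (P.boundary j).edges ∧ e ∈ (P.boundary i).edges}.ncard ≤
      P.faceSize i / 3 := by
  classical
  set S := {j : Fin P.numFaces | j ≠ i ∧ P.faceSize j = 3 ∧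
    ∃ e : Sym2 V, e ∈ (P.boundary j).edges ∧ e ∈ (P.boundary i).edges}
  obtain hS | ⟨_, hj₀i, -, _, hj₀, hi₀⟩ := S.eq_empty_or_nonempty
  · simp [hS]
  have hd := P.three_le_faceSize hj₀i hj₀ hi₀
  have hpos : ∀ j ∈ S, ∃ q < (P.boundary i).length,
      s((P.boundary i).getVert q, (P.boundary i).getVert (q + 1)) ∈ (P.boundary j).edges := by
    rintro j ⟨-, -, e, hj, hi⟩
    obtain ⟨q, hq, rfl⟩ := List.getElem_of_mem hi
    exact ⟨q, by simpa using hq, Walk.getElem_edges hq ▸ hj⟩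
  choose! p hp hpj using hpos
  rw [Set.ncard_eq_toFinset_card']
  refine (P.boundary i).card_le_length_div_three hd (p := p)
    (T := fun j => ((P.boundary j).support.toFinset : Set V))
    (fun j hj => hp j (Set.mem_toFinset.1 hj)) (fun j hj => ?_) (fun j hj j' hj' hjj' => ?_)
  · rw [Set.mem_toFinset] at hj
    simp only [Finset.mem_coe, List.mem_toFinset]
    exact ⟨(P.boundary j).fst_mem_support_of_mem_edges (hpj j hj),
      (P.boundary j).snd_mem_support_of_mem_edges (hpj j hj)⟩
  · rw [Set.mem_toFinset] at hj hj'
    exact ht _ _ ((P.boundary j).isTriangle_support_toFinset hj.2.1)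
      ((P.boundary j').isTriangle_support_toFinset hj'.2.1)
      (P.support_toFinset_ne_of_faceSize_eq_three hj.1 hj'.1 hjj' hj'.2.1 (hpj j hj)
        ((P.boundary i).mk_mem_edges_iff_exists.2 ⟨p j, hp j hj, rfl⟩))

/-- in a plane graph with triangles pairwise at distance at least `2`, a face
`i` is adjacent to at most `⌊d(i)/3⌋` faces of size `3`, provided each such `3`-face shares
exactly one edge with `i`. -/
theorem stmt19 {V : Type u} [Fintype V] [DecidableEq V] (P : PlaneGraph V)
    (ht : TrianglesFar P.graph) (i : Fin P.numFaces)
    (hone : ∀ j : Fin P.numFaces, j ≠ i → P.faceSize j = 3 →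
      (∃ e : Sym2 V, e ∈ (P.boundary j).edges ∧ e ∈ (P.boundary i).edges) →
      ((P.boundary j).edges.toFinset ∩ (P.boundary i).edges.toFinset).card = 1) :
    {j : Fin P.numFaces | j ≠ i ∧ P.faceSize j = 3 ∧
        ∃ e : Sym2 V, e ∈ (P.boundary j).edges ∧ e ∈ (P.boundary i).edges}.ncard ≤
      P.faceSize i / 3 :=
  stmt19_general P ht i
end
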